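/- arXiv:math/0503166 — 4 statements merged into one kernel-verified Lean document; each statement's English description precedes it below -/
import Mathlib

section
/- For any group G, the map R : G × G → G × G defined by R(x,y) = (x⁻¹ y⁻¹ x, y² x) satisfies the set-theoretic Yang–Baxter equation. -/
/-- `R × 1` acting on the first two factors of `X × X × X`. -/
def R12 {X : Type*} (R : X × X → X × X) : X × X × X → X × X × X :=
  fun p => ((R (p.1, p.2.1)).1, (R (p.1, p.2.1)).2, p.2.2)

/-- `1 × R` acting on the last two factors of `X × X × X`. -/
def R23 {X : Type*} (R : X × X → X × X) : X × X × X → X × X × X :=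
  fun p => (p.1, R p.2)

/-- `R` is a solution to the set-theoretic Yang–Baxter equation. -/
def IsSYBE {X : Type*} (R : X × X → X × X) : Prop :=
  R12 R ∘ R23 R ∘ R12 R = R23 R ∘ R12 R ∘ R23 R

theorem isSYBE_mk_iff {X : Type*} (σ τ : X → X → X) :
    IsSYBE (fun p : X × X => (σ p.1 p.2, τ p.1 p.2)) ↔
      ∀ x y z : X,
        σ (σ x y) (σ (τ x y) z) = σ x (σ y z) ∧
        τ (σ x y) (σ (τ x y) z) = σ (τ x (σ y z)) (τ y z) ∧
        τ (τ x y) z = τ (τ x (σ y z)) (τ y z) := by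
  simp only [IsSYBE, funext_iff, Prod.forall, Function.comp, R12, R23, Prod.mk.injEq]

theorem stmt5 (G : Type*) [Group G] :
    IsSYBE (fun p : G × G => (p.1⁻¹ * p.2⁻¹ * p.1, p.2 ^ 2 * p.1)) := by
  refine (isSYBE_mk_iff (fun x y => x⁻¹ * y⁻¹ * x) (fun x y => y ^ 2 * x)).2 ?_
  intro x y z
  simp only [sq]
  refine ⟨?_, ?_, ?_⟩ <;> group
end

section
/- Let G be a group, V a left module over the group ring ℤ[G], and let u, v : G × G → G together with u₁, u₂, v₁, v₂ : G × G → ℤ[G] satisfy the nine 'derivative' equations: for all x,y,z ∈ G, (i) u₁(u(x,y), u(v(x,y),z)) u₁(x,y) + u₂(u(x,y), u(v(x,y),z)) u₁(v(x,y),z) v₁(x,y) = u₁(x, u(y,z)); (ii) u₁(u(x,y), u(v(x,y),z)) u₂(x,y) + u₂(u(x,y), u(v(x,y),z)) u₁(v(x,y),z) v₂(x,y) = u₂(x, u(y,z)) u₁(y,z); (iii) u₂(u(x,y), u(v(x,y),z)) u₂(v(x,y),z) = u₂(x, u(y,z)) u₂(y,z); (iv) v₁(u(x,y), u(v(x,y),z))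 u₁(x,y) + v₂(u(x,y), u(v(x,y),z)) u₁(v(x,y),z) v₁(x,y) = u₁(v(x,u(y,z)), v(y,z)) v₁(x, u(y,z)); (v) v₁(u(x,y), u(v(x,y),z)) u₂(x,y) + v₂(u(x,y), u(v(x,y),z)) u₁(v(x,y),z) v₂(x,y) = u₁(v(x,u(y,z)), v(y,z)) v₂(x, u(y,z)) u₁(y,z) + u₂(v(x,u(y,z)), v(y,z)) v₁(y,z); (vi) v₂(u(x,y), u(v(x,y),z)) u₂(v(x,y),z) = u₁(v(x,u(y,z)), v(y,z)) v₂(x,u(y,z)) u₂(y,z) + u₂(v(x,u(y,z)), v(y,z)) v₂(y,z); (vii) v₁(v(x,y),z) v₁(x,y) = v₁(v(x,u(y,z)), v(y,z)) v₁(x, u(y,z)); (viii) v₁(v(x,y),z) v₂(x,y) = v₁(v(x,u(y,z)), v(y,z)) v₂(x,u(y,z)) u₁(y,z) + v₂(v(x,u(y,z)), v(y,z)) v₁(y,z); (ix) v₂(v(x,y),z) = v₁(v(x,u(y,z)), v(y,z)) v₂(x,u(y,z)) u₂(y,z) + v₂(v(x,u(y,z)), v(y,z)) v₂(y,z). Moreover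 suppose u, v satisfy the three Wada equations (1) u(u(x,y), u(v(x,y),z)) = u(x, u(y,z)), (2) v(u(x,y), u(v(x,y),z)) = u(v(x,u(y,z)), v(y,z)), (3) v(v(x,y),z) = v(v(x,u(y,z)), v(y,z)). Then the map R : (G × V)² → (G × V)² defined by R((x,a),(y,b)) = ((u(x,y), u₁(x,y)·a + u₂(x,y)·b), (v(x,y), v₁(x,y)·a + v₂(x,y)·b)) is a solution to the set-theoretic Yang–Baxter equation on G × V. -/
/-! The V-part of the map is linear with coefficient matrix [[u₁, u₂], [v₁, v₂]] at each base
point, so on the third power both sides of the braid relation act on the fibre V³ by 3 × 3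
matrices over the coefficient ring, and the nine derivative equations say precisely that these
two matrices agree, entry by entry; the Wada equations are the braid relation on the base. -/

section LinearExtension

variable {X S V : Type*} [Semiring S] [AddCommMonoid V] [Module S V]

def linearExtension (u v : X × X → X) (u₁ u₂ v₁ v₂ : X × X → S) :
    (X × V) × (X × V) → (X × V) × (X × V) :=
  fun p => ((u (p.1.1, p.2.1), u₁ (p.1.1, p.2.1) • p.1.2 + u₂ (p.1.1, p.2.1) • p.2.2),
    (v (p.1.1, p.2.1), v₁ (p.1.1, p.2.1) • p.1.2 + v₂ (p.1.1, p.2.1) • p.2.2))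

theorem smul_substitute_left (A B C D E F G H : S) (a b c : V) :
    A • (B • a + C • b) + D • (E • (F • a + G • b) + H • c)
      = (A * B + D * E * F) • a + (A * C + D * E * G) • b + (D * H) • c := by
  simp only [smul_add, add_smul, mul_smul]
  abel

theorem smul_substitute_left_last (E F G H : S) (a b c : V) :
    E • (F • a + G • b) + H • c = (E * F) • a + (E * G) • b + H • c := by
  simp only [smul_add, mul_smul]

theorem smul_substitute_right_first (A B C D : S) (a b c : V) :
    A • a + B • (C • b + D • c) = A • a + (B * C) • b + (B * D) • c := by
  simp only [smul_add, mul_smul, add_assoc]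

theorem smul_substitute_right (A B C D E F G H : S) (a b c : V) :
    A • (B • a + C • (D • b + E • c)) + F • (G • b + H • c)
      = (A * B) • a + (A * C * D + F * G) • b + (A * C * E + F * H) • c := by
  simp only [smul_add, add_smul, mul_smul]
  abel

theorem isSYBE_linearExtension (u v : X × X → X) (u₁ u₂ v₁ v₂ : X × X → S)
    (h1 : ∀ x y z, u (u (x, y), u (v (x, y), z)) = u (x, u (y, z)))
    (h2 : ∀ x y z, v (u (x, y), u (v (x, y), z)) = u (v (x, u (y, z)), v (y, z)))
    (h3 : ∀ x y z, v (v (x, y), z) = v (v (x, u (y, z)), v (y, z)))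
    (hi : ∀ x y z,
      u₁ (u (x,y), u (v (x,y), z)) * u₁ (x,y)
        + u₂ (u (x,y), u (v (x,y), z)) * u₁ (v (x,y), z) * v₁ (x,y)
      = u₁ (x, u (y,z)))
    (hii : ∀ x y z,
      u₁ (u (x,y), u (v (x,y), z)) * u₂ (x,y)
        + u₂ (u (x,y), u (v (x,y), z)) * u₁ (v (x,y), z) * v₂ (x,y)
      = u₂ (x, u (y,z)) * u₁ (y,z))
    (hiii : ∀ x y z,
      u₂ (u (x,y), u (v (x,y), z)) * u₂ (v (x,y), z)
      = u₂ (x, u (y,z)) * u₂ (y,z))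
    (hiv : ∀ x y z,
      v₁ (u (x,y), u (v (x,y), z)) * u₁ (x,y)
        + v₂ (u (x,y), u (v (x,y), z)) * u₁ (v (x,y), z) * v₁ (x,y)
      = u₁ (v (x, u (y,z)), v (y,z)) * v₁ (x, u (y,z)))
    (hv : ∀ x y z,
      v₁ (u (x,y), u (v (x,y), z)) * u₂ (x,y)
        + v₂ (u (x,y), u (v (x,y), z)) * u₁ (v (x,y), z) * v₂ (x,y)
      = u₁ (v (x, u (y,z)), v (y,z)) * v₂ (x, u (y,z)) * u₁ (y,z)
        + u₂ (v (x, u (y,z)), v (y,z)) * v₁ (y,z))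
    (hvi : ∀ x y z,
      v₂ (u (x,y), u (v (x,y), z)) * u₂ (v (x,y), z)
      = u₁ (v (x, u (y,z)), v (y,z)) * v₂ (x, u (y,z)) * u₂ (y,z)
        + u₂ (v (x, u (y,z)), v (y,z)) * v₂ (y,z))
    (hvii : ∀ x y z,
      v₁ (v (x,y), z) * v₁ (x,y)
      = v₁ (v (x, u (y,z)), v (y,z)) * v₁ (x, u (y,z)))
    (hviii : ∀ x y z,
      v₁ (v (x,y), z) * v₂ (x,y)
      = v₁ (v (x, u (y,z)), v (y,z)) * v₂ (x, u (y,z)) * u₁ (y,z)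
        + v₂ (v (x, u (y,z)), v (y,z)) * v₁ (y,z))
    (hix : ∀ x y z,
      v₂ (v (x,y), z)
      = v₁ (v (x, u (y,z)), v (y,z)) * v₂ (x, u (y,z)) * u₂ (y,z)
        + v₂ (v (x, u (y,z)), v (y,z)) * v₂ (y,z)) :
    IsSYBE (linearExtension (V := V) u v u₁ u₂ v₁ v₂) := by
  funext ⟨⟨x, a⟩, ⟨y, b⟩, ⟨z, c⟩⟩
  simp only [linearExtension, R12, R23, Function.comp_apply, Prod.mk.injEq]
  refine ⟨⟨h1 x y z, ?_⟩, ⟨h2 x y z, ?_⟩, h3 x y z, ?_⟩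
  · rw [smul_substitute_left, smul_substitute_right_first, hi x y z, hii x y z, hiii x y z]
  · rw [smul_substitute_left, smul_substitute_right, hiv x y z, hv x y z, hvi x y z]
  · rw [smul_substitute_left_last, smul_substitute_right, hvii x y z, hviii x y z, hix x y z]

end LinearExtension

open MonoidAlgebra in
theorem stmt7 (G : Type*) [Group G] (V : Type*) [AddCommGroup V]
    [Module (MonoidAlgebra ℤ G) V]
    (u v : G × G → G) (u₁ u₂ v₁ v₂ : G × G → MonoidAlgebra ℤ G)
    (hi : ∀ x y z : G,
      u₁ (u (x,y), u (v (x,y), z)) * u₁ (x,y)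
        + u₂ (u (x,y), u (v (x,y), z)) * u₁ (v (x,y), z) * v₁ (x,y)
      = u₁ (x, u (y,z)))
    (hii : ∀ x y z : G,
      u₁ (u (x,y), u (v (x,y), z)) * u₂ (x,y)
        + u₂ (u (x,y), u (v (x,y), z)) * u₁ (v (x,y), z) * v₂ (x,y)
      = u₂ (x, u (y,z)) * u₁ (y,z))
    (hiii : ∀ x y z : G,
      u₂ (u (x,y), u (v (x,y), z)) * u₂ (v (x,y), z)
      = u₂ (x, u (y,z)) * u₂ (y,z))
    (hiv : ∀ x y z : G,
      v₁ (u (x,y), u (v (x,y), z)) * u₁ (x,y)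
        + v₂ (u (x,y), u (v (x,y), z)) * u₁ (v (x,y), z) * v₁ (x,y)
      = u₁ (v (x, u (y,z)), v (y,z)) * v₁ (x, u (y,z)))
    (hv : ∀ x y z : G,
      v₁ (u (x,y), u (v (x,y), z)) * u₂ (x,y)
        + v₂ (u (x,y), u (v (x,y), z)) * u₁ (v (x,y), z) * v₂ (x,y)
      = u₁ (v (x, u (y,z)), v (y,z)) * v₂ (x, u (y,z)) * u₁ (y,z)
        + u₂ (v (x, u (y,z)), v (y,z)) * v₁ (y,z))
    (hvi : ∀ x y z : G,
      v₂ (u (x,y), u (v (x,y), z)) * u₂ (v (x,y), z)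
      = u₁ (v (x, u (y,z)), v (y,z)) * v₂ (x, u (y,z)) * u₂ (y,z)
        + u₂ (v (x, u (y,z)), v (y,z)) * v₂ (y,z))
    (hvii : ∀ x y z : G,
      v₁ (v (x,y), z) * v₁ (x,y)
      = v₁ (v (x, u (y,z)), v (y,z)) * v₁ (x, u (y,z)))
    (hviii : ∀ x y z : G,
      v₁ (v (x,y), z) * v₂ (x,y)
      = v₁ (v (x, u (y,z)), v (y,z)) * v₂ (x, u (y,z)) * u₁ (y,z)
        + v₂ (v (x, u (y,z)), v (y,z)) * v₁ (y,z))
    (hix : ∀ x y z : G,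
      v₂ (v (x,y), z)
      = v₁ (v (x, u (y,z)), v (y,z)) * v₂ (x, u (y,z)) * u₂ (y,z)
        + v₂ (v (x, u (y,z)), v (y,z)) * v₂ (y,z))
    (h1 : ∀ x y z : G, u (u (x, y), u (v (x, y), z)) = u (x, u (y, z)))
    (h2 : ∀ x y z : G, v (u (x, y), u (v (x, y), z)) = u (v (x, u (y, z)), v (y, z)))
    (h3 : ∀ x y z : G, v (v (x, y), z) = v (v (x, u (y, z)), v (y, z))) :
    IsSYBE (fun p : (G × V) × (G × V) =>
      ((u (p.1.1, p.2.1), u₁ (p.1.1, p.2.1) • p.1.2 + u₂ (p.1.1, p.2.1) • p.2.2),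
       (v (p.1.1, p.2.1), v₁ (p.1.1, p.2.1) • p.1.2 + v₂ (p.1.1, p.2.1) • p.2.2))) := by
  exact isSYBE_linearExtension u v u₁ u₂ v₁ v₂ h1 h2 h3 hi hii hiii hiv hv hvi hvii hviii hix
end

section
/- Let G be a group and V a left ℤ[G]-module. The map R : (G × V)² → (G × V)² defined by R((x,a),(y,b)) = ((y⁻¹, -y⁻¹·b), (y x y, y·a + (1 + yx)·b)) is a solution to the set-theoretic Yang–Baxter equation on G × V. -/
theorem IsSYBE.equiv_conj {X Y : Type*} {R : Y × Y → Y × Y} (hR : IsSYBE R) (e : X ≃ Y) :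
    IsSYBE (fun p => Prod.map e.symm e.symm (R (Prod.map e e p))) := by
  funext ⟨x, y, z⟩
  simpa [R12, R23] using
    congrArg (Prod.map e.symm (Prod.map e.symm e.symm)) (congrFun hR (e x, e y, e z))

def invSandwich (H : Type*) [Group H] : H × H → H × H :=
  fun p => (p.2⁻¹, p.2 * p.1 * p.2)

theorem isSYBE_invSandwich (H : Type*) [Group H] : IsSYBE (invSandwich H) := by
  funext ⟨x, y, z⟩
  simp only [Function.comp, R12, R23, invSandwich, Prod.mk.injEq]
  exact ⟨trivial, by group, by group⟩

section GroupRingModule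

open MonoidAlgebra

variable (G V : Type*) [Group G] [AddCommGroup V] [Module (MonoidAlgebra ℤ G) V]

theorem of_smul_of_smul (g h : G) (v : V) :
    of ℤ G g • of ℤ G h • v = of ℤ G (g * h) • v := by
  rw [smul_smul, map_mul]

noncomputable def groupRingAut : G →* MulAut (Multiplicative V) where
  toFun g := AddEquiv.toMultiplicative
    { toFun := (of ℤ G g • ·)
      invFun := (of ℤ G g⁻¹ • ·)
      left_inv v := by simp only [of_smul_of_smul, inv_mul_cancel, map_one, one_smul]
      right_inv v := by simp only [of_smul_of_smul, mul_inv_cancel, map_one, one_smul]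
      map_add' := smul_add _ }
  map_one' := by ext; simp only [map_one, one_smul]; rfl
  map_mul' g h := by ext; simp only [← of_smul_of_smul]; rfl

theorem toAdd_groupRingAut_apply (g : G) (v : Multiplicative V) :
    (groupRingAut G V g v).toAdd = of ℤ G g • v.toAdd :=
  rfl

def prodEquivSemidirectProduct : G × V ≃ Multiplicative V ⋊[groupRingAut G V] G where
  toFun p := ⟨.ofAdd p.2, p.1⟩
  invFun q := (q.right, q.left.toAdd)
  left_inv _ := rfl
  right_inv _ := rfl

theorem prodEquivSemidirectProduct_conj_invSandwich (p : (G × V) × (G × V)) :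
    let e := prodEquivSemidirectProduct G V
    Prod.map e.symm e.symm (invSandwich _ (Prod.map e e p)) =
      ((p.2.1⁻¹, (-(of ℤ G p.2.1⁻¹)) • p.2.2),
       (p.2.1 * p.1.1 * p.2.1,
        (of ℤ G p.2.1) • p.1.2 + (1 + of ℤ G (p.2.1 * p.1.1)) • p.2.2)) := by
  obtain ⟨⟨x, a⟩, ⟨y, b⟩⟩ := p
  ext
  · rfl
  · show (groupRingAut G V y⁻¹ (.ofAdd b)⁻¹).toAdd = -of ℤ G y⁻¹ • b
    rw [toAdd_groupRingAut_apply, toAdd_inv, toAdd_ofAdd, smul_neg, neg_smul]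
  · rfl
  · show (.ofAdd b * groupRingAut G V y (.ofAdd a) * groupRingAut G V (y * x) (.ofAdd b)).toAdd = _
    simp only [toAdd_mul, toAdd_groupRingAut_apply, toAdd_ofAdd, add_smul, one_smul]
    abel

end GroupRingModule

open MonoidAlgebra in
theorem stmt8 (G : Type*) [Group G] (V : Type*) [AddCommGroup V]
    [Module (MonoidAlgebra ℤ G) V] :
    IsSYBE (fun p : (G × V) × (G × V) =>
      ((p.2.1⁻¹, (-(of ℤ G p.2.1⁻¹)) • p.2.2),
       (p.2.1 * p.1.1 * p.2.1,
        (of ℤ G p.2.1) • p.1.2 + (1 + of ℤ G (p.2.1 * p.1.1)) • p.2.2))) := by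
  simpa only [prodEquivSemidirectProduct_conj_invSandwich] using
    (isSYBE_invSandwich _).equiv_conj (prodEquivSemidirectProduct G V)
end

section
/- Let G be a group and V a left ℤ[G]-module. The map R : (G × V)² → (G × V)² defined by R((x,a),(y,b)) = ((y, b), (y x⁻¹ y, (-y x⁻¹)·a + (1 + y x⁻¹)·b)) is a solution to the set-theoretic Yang–Baxter equation on G × V. -/
theorem isSYBE_iff_rightSelfDistrib {X : Type*} (op : X → X → X) :
    IsSYBE (fun p : X × X => (p.2, op p.1 p.2)) ↔
      ∀ p q r, op (op p q) r = op (op p r) (op q r) := by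
  constructor
  · intro h p q r
    exact congrArg (fun t : X × X × X => t.2.2) (congrFun h (p, q, r))
  · intro h
    funext ⟨p, q, r⟩
    exact congrArg (fun t => (r, op q r, t)) (h p q r)

section ModuleExt

variable {X A V : Type*} [Ring A] [AddCommGroup V] [Module A V]

def moduleExt (op : X → X → X) (η τ : X → X → A) (u v : X × V) : X × V :=
  (op u.1 v.1, η u.1 v.1 • u.2 + τ u.1 v.1 • v.2)

theorem moduleExt_rightSelfDistrib (op : X → X → X) (η τ : X → X → A)
    (hop : ∀ p q r, op (op p q) r = op (op p r) (op q r))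
    (hηη : ∀ p q r, η (op p q) r * η p q = η (op p r) (op q r) * η p r)
    (hητ : ∀ p q r, η (op p q) r * τ p q = τ (op p r) (op q r) * η q r)
    (hττ : ∀ p q r, τ (op p q) r = η (op p r) (op q r) * τ p r + τ (op p r) (op q r) * τ q r)
    (u v w : X × V) :
    moduleExt op η τ (moduleExt op η τ u v) w =
      moduleExt op η τ (moduleExt op η τ u w) (moduleExt op η τ v w) := by
  obtain ⟨p, a⟩ := u
  obtain ⟨q, b⟩ := v
  obtain ⟨r, c⟩ := w
  refine Prod.ext (hop p q r) ?_
  simp only [moduleExt, smul_add, ← mul_smul, hηη p q r, hητ p q r, hττ p q r, add_smul]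
  abel

end ModuleExt

section CoreQuandle

variable {G A : Type*} [Group G] [Ring A] (f : G →* A)

theorem core_rightSelfDistrib (p q r : G) :
    r * (q * p⁻¹ * q)⁻¹ * r = r * q⁻¹ * r * (r * p⁻¹ * r)⁻¹ * (r * q⁻¹ * r) := by
  group

theorem core_foxCoeff_neg_mul_neg (p q r : G) :
    -f (r * (q * p⁻¹ * q)⁻¹) * -f (q * p⁻¹) =
      -f (r * q⁻¹ * r * (r * p⁻¹ * r)⁻¹) * -f (r * p⁻¹) := by
  simp only [neg_mul_neg, ← map_mul]
  congr 1
  group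

theorem core_foxCoeff_neg_mul_one_add (p q r : G) :
    -f (r * (q * p⁻¹ * q)⁻¹) * (1 + f (q * p⁻¹)) =
      (1 + f (r * q⁻¹ * r * (r * p⁻¹ * r)⁻¹)) * -f (r * q⁻¹) := by
  simp only [mul_add, add_mul, neg_mul, mul_neg, mul_one, one_mul, ← map_mul, mul_inv_rev, inv_inv,
    mul_assoc, inv_mul_cancel_left, mul_inv_cancel_left, mul_inv_cancel]
  abel

theorem core_foxCoeff_one_add (p q r : G) :
    1 + f (r * (q * p⁻¹ * q)⁻¹) =
      -f (r * q⁻¹ * r * (r * p⁻¹ * r)⁻¹) * (1 + f (r * p⁻¹)) +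
        (1 + f (r * q⁻¹ * r * (r * p⁻¹ * r)⁻¹)) * (1 + f (r * q⁻¹)) := by
  simp only [mul_add, add_mul, neg_mul, mul_one, one_mul, ← map_mul, mul_inv_rev, inv_inv,
    mul_assoc, inv_mul_cancel_left, mul_inv_cancel_left, mul_inv_cancel]
  abel

end CoreQuandle

open MonoidAlgebra in
theorem stmt11 (G : Type*) [Group G] (V : Type*) [AddCommGroup V]
    [Module (MonoidAlgebra ℤ G) V] :
    IsSYBE (fun p : (G × V) × (G × V) =>
      ((p.2.1, p.2.2),
       (p.2.1 * p.1.1⁻¹ * p.2.1,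
        (-(of ℤ G (p.2.1 * p.1.1⁻¹))) • p.1.2
          + (1 + of ℤ G (p.2.1 * p.1.1⁻¹)) • p.2.2))) :=
  (isSYBE_iff_rightSelfDistrib (moduleExt (fun x y : G => y * x⁻¹ * y)
      (fun x y => -of ℤ G (y * x⁻¹)) (fun x y => 1 + of ℤ G (y * x⁻¹)))).mpr
    (moduleExt_rightSelfDistrib _ _ _ core_rightSelfDistrib
      (core_foxCoeff_neg_mul_neg (of ℤ G)) (core_foxCoeff_neg_mul_one_add (of ℤ G))
      (core_foxCoeff_one_add (of ℤ G)))
end
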